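/- arXiv:0910.2875 — 4 statements merged into one kernel-verified Lean document; each statement's English description precedes it below -/
import Mathlib

section
/- Let (φ_{s,t}) be a non-trivial evolution family in 𝔻 with common Denjoy–Wolff point τ, |τ| = 1. Say that the trajectory starting at (s,z) converges to τ non-tangentially if φ_{s,t}(z) → τ as t → +∞ and there exists α ∈ (0, π/2) such that |Arg(1 − conj(τ)·φ_{s,t}(z))| < α for all t ≥ s (i.e. the whole trajectory lies in the Stolz angle S_α = { w ∈ 𝔻 : |Arg(1 − conj(τ)·w)| < α }). Then the following are equivalent: (1) there exist z ∈ 𝔻 and s ≥ 0 such that the trajectory starting at (s,z) converges to τ non-tangentially; (2) for every z ∈ 𝔻 and every s ≥ 0 the trajectory starting at (s,z) converges to τ non-tangentially. -/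
open Complex MeasureTheory Set Filter Topology

/-- The open unit disk `𝔻`. -/
def UD : Set ℂ := {z : ℂ | ‖z‖ < 1}

/-- An evolution family in the unit disk with common Denjoy-Wolff point `τ`, i.e. whose
associated vector field has the Berkson-Porta form
`G(z,t) = (z − τ)(conj τ · z − 1) p(z,t)` with `p` a generalized Herglotz function. -/
structure EvolutionFamilyDisk (τ : ℂ) where
  φ : ℝ → ℝ → ℂ → ℂ
  p : ℂ → ℝ → ℂ
  mapsTo : ∀ ⦃s t : ℝ⦄, 0 ≤ s → s ≤ t → Set.MapsTo (φ s t) UD UD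
  holo : ∀ ⦃s t : ℝ⦄, 0 ≤ s → s ≤ t → DifferentiableOn ℂ (φ s t) UD
  id_eq : ∀ ⦃s : ℝ⦄, 0 ≤ s → ∀ z ∈ UD, φ s s z = z
  comp : ∀ ⦃s u t : ℝ⦄, 0 ≤ s → s ≤ u → u ≤ t → ∀ z ∈ UD,
    φ s t z = φ u t (φ s u z)
  p_meas : ∀ z ∈ UD, Measurable (p z)
  p_holo : ∀ t : ℝ, 0 ≤ t → DifferentiableOn ℂ (fun z => p z t) UD
  p_re_nonneg : ∀ z ∈ UD, ∀ t : ℝ, 0 ≤ t → 0 ≤ (p z t).re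
  G_bound : ∀ K : Set ℂ, K ⊆ UD → IsCompact K → ∀ T : ℝ, 0 < T →
    ∃ k : ℝ → ℝ, (∀ t, 0 ≤ k t) ∧ MeasureTheory.IntegrableOn k (Set.Icc 0 T) ∧
      ∀ z ∈ K, ∀ᵐ t ∂(MeasureTheory.volume.restrict (Set.Icc (0:ℝ) T)),
        ‖(z - τ) * ((starRingEnd ℂ) τ * z - 1) * p z t‖ ≤ k t
  integral_eq : ∀ ⦃s t : ℝ⦄, 0 ≤ s → s ≤ t → ∀ z ∈ UD,
    φ s t z = z + ∫ ξ in s..t,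
      (φ s ξ z - τ) * ((starRingEnd ℂ) τ * φ s ξ z - 1) * p (φ s ξ z) ξ

/-- The family is non-trivial if some `φ_{s,t}`, `s < t`, is not the identity of `𝔻`. -/
def EvolutionFamilyDisk.Nontrivial {τ : ℂ} (E : EvolutionFamilyDisk τ) : Prop :=
  ∃ s t : ℝ, 0 ≤ s ∧ s < t ∧ ∃ z ∈ UD, E.φ s t z ≠ z

/-- The ω-limit (in `ℂ`) of the trajectory `t ↦ φ_{s,t}(z)`. -/
def omegaLimitDisk {τ : ℂ} (E : EvolutionFamilyDisk τ) (s : ℝ) (z : ℂ) : Set ℂ :=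
  {q : ℂ | ∃ tn : ℕ → ℝ, Tendsto tn atTop atTop ∧
    Tendsto (fun n => E.φ s (tn n) z) atTop (𝓝 q)}
/-- The trajectory starting at `(s,z)` converges to `τ` non-tangentially: it tends to `τ`
and stays in some Stolz angle `S_α = {w ∈ 𝔻 : |Arg(1 − conj τ · w)| < α}` at `τ`. -/
def ConvergesNonTangentially {τ : ℂ} (E : EvolutionFamilyDisk τ) (s : ℝ) (z : ℂ) :
    Prop :=
  Tendsto (fun t => E.φ s t z) atTop (𝓝 τ) ∧
  ∃ α : ℝ, 0 < α ∧ α < Real.pi / 2 ∧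
    ∀ t : ℝ, s ≤ t → |Complex.arg (1 - (starRingEnd ℂ) τ * E.φ s t z)| < α

/-! From time `s₀ = max s s'` on, two trajectories are images of two fixed points under the
same holomorphic self-maps `φ_{s₀,t}` of `𝔻`, so by Schwarz–Pick their pseudo-hyperbolic
distance stays below some `c < 1`. A point `u` at pseudo-hyperbolic distance `≤ c` from `γ`
satisfies `|u - γ| = O(1 - |γ|)` and `1 - |γ| = O(1 - |u|)`; this makes `u` follow `γ` to `τ`
and keeps it in a wider Stolz angle whenever `γ` is in one. On the compact time interval
`[s', s₀]` the trajectory stays in a compact subdisk, which lies in a Stolz angle anyway. -/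

open ComplexConjugate

/-- `‖mobius a z‖` is the pseudo-hyperbolic distance between `a` and `z`. -/
noncomputable def mobius (a z : ℂ) : ℂ := (z - a) / (1 - conj a * z)

lemma norm_one_sub_conj_mul_sq_sub_norm_sub_sq (a z : ℂ) :
    ‖1 - conj a * z‖ ^ 2 - ‖z - a‖ ^ 2 = (1 - ‖a‖ ^ 2) * (1 - ‖z‖ ^ 2) := by
  simp only [← normSq_eq_norm_sq, normSq_apply, sub_re, sub_im, one_re, one_im, mul_re,
    mul_im, conj_re, conj_im]
  ring

lemma one_sub_norm_le_norm_one_sub_conj_mul {a z : ℂ} (hz : ‖z‖ ≤ 1) :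
    1 - ‖a‖ ≤ ‖1 - conj a * z‖ := by
  have h : ‖conj a * z‖ ≤ ‖a‖ := by
    rw [norm_mul, RCLike.norm_conj]
    exact mul_le_of_le_one_right (norm_nonneg a) hz
  linarith [norm_one (α := ℂ) ▸ norm_sub_norm_le (1 : ℂ) (conj a * z)]

lemma one_sub_conj_mul_ne_zero {a z : ℂ} (ha : ‖a‖ < 1) (hz : ‖z‖ < 1) :
    1 - conj a * z ≠ 0 :=
  norm_pos_iff.mp ((sub_pos.mpr ha).trans_le (one_sub_norm_le_norm_one_sub_conj_mul hz.le))

lemma norm_sub_lt_norm_one_sub_conj_mul {a z : ℂ} (ha : ‖a‖ < 1) (hz : ‖z‖ < 1) :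
    ‖z - a‖ < ‖1 - conj a * z‖ := by
  have key := norm_one_sub_conj_mul_sq_sub_norm_sub_sq a z
  have hpos : 0 < (1 - ‖a‖ ^ 2) * (1 - ‖z‖ ^ 2) := by
    apply mul_pos <;> nlinarith [norm_nonneg a, norm_nonneg z]
  exact lt_of_pow_lt_pow_left₀ 2 (norm_nonneg _) (by linarith)

lemma norm_mobius_lt_one {a z : ℂ} (ha : ‖a‖ < 1) (hz : ‖z‖ < 1) : ‖mobius a z‖ < 1 := by
  rw [mobius, norm_div, div_lt_one (norm_pos_iff.mpr (one_sub_conj_mul_ne_zero ha hz))]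
  exact norm_sub_lt_norm_one_sub_conj_mul ha hz

lemma norm_sub_le_mul_of_norm_mobius_le {a z : ℂ} {c : ℝ} (ha : ‖a‖ < 1) (hz : ‖z‖ < 1)
    (h : ‖mobius a z‖ ≤ c) : ‖z - a‖ ≤ c * ‖1 - conj a * z‖ := by
  rwa [mobius, norm_div, div_le_iff₀ (norm_pos_iff.mpr (one_sub_conj_mul_ne_zero ha hz))] at h

lemma mobius_neg_mobius {a z : ℂ} (ha : ‖a‖ < 1) (hz : ‖z‖ < 1) :
    mobius (-a) (mobius a z) = z := by
  have hd := one_sub_conj_mul_ne_zero ha hz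
  have hu := one_sub_conj_mul_ne_zero ha ha
  have e : mobius (-a) (mobius a z) = (mobius a z + a) / (1 + conj a * mobius a z) := by
    simp [mobius, sub_neg_eq_add]
  have num : mobius a z + a = z * (1 - conj a * a) / (1 - conj a * z) := by
    rw [mobius, eq_div_iff hd, add_mul, div_mul_cancel₀ _ hd]
    ring
  have den : 1 + conj a * mobius a z = (1 - conj a * a) / (1 - conj a * z) := by
    rw [mobius, eq_div_iff hd, add_mul, mul_assoc, div_mul_cancel₀ _ hd]
    ring
  rw [e, num, den, div_div_div_cancel_right₀ hd, mul_div_cancel_right₀ z hu]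

lemma mapsTo_mobius {a : ℂ} (ha : ‖a‖ < 1) : MapsTo (mobius a) UD UD :=
  fun _ hz => norm_mobius_lt_one ha hz

lemma differentiableOn_mobius {a : ℂ} (ha : ‖a‖ < 1) : DifferentiableOn ℂ (mobius a) UD :=
  ((differentiable_id.sub_const a).differentiableOn).div
    ((differentiable_const _).mul differentiable_id |>.const_sub 1).differentiableOn
    fun _ hz => one_sub_conj_mul_ne_zero ha hz

lemma UD_eq_ball : UD = Metric.ball (0 : ℂ) 1 := by
  ext z
  simp [UD]

/-- The Schwarz–Pick lemma. -/
lemma norm_mobius_le_of_mapsTo {f : ℂ → ℂ} (hd : DifferentiableOn ℂ f UD) (hm : MapsTo f UD UD)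
    {a z : ℂ} (ha : a ∈ UD) (hz : z ∈ UD) : ‖mobius (f a) (f z)‖ ≤ ‖mobius a z‖ := by
  have hna : ‖-a‖ < 1 := by rw [norm_neg]; exact ha
  have hfa : ‖f a‖ < 1 := hm ha
  have hd' : DifferentiableOn ℂ (mobius (f a) ∘ f ∘ mobius (-a)) (Metric.ball 0 1) := by
    rw [← UD_eq_ball]
    exact (differentiableOn_mobius hfa).comp (hd.comp (differentiableOn_mobius hna)
      (mapsTo_mobius hna)) (hm.comp (mapsTo_mobius hna))
  have hm' : MapsTo (mobius (f a) ∘ f ∘ mobius (-a)) (Metric.ball 0 1) (Metric.ball 0 1) := by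
    rw [← UD_eq_ball]
    exact (mapsTo_mobius hfa).comp (hm.comp (mapsTo_mobius hna))
  have h0 : (mobius (f a) ∘ f ∘ mobius (-a)) 0 = 0 := by
    simp [mobius]
  have := Complex.norm_le_norm_of_mapsTo_ball hd' (hm'.mono_right Metric.ball_subset_closedBall)
    h0 (norm_mobius_lt_one ha hz)
  rwa [Function.comp_apply, Function.comp_apply, mobius_neg_mobius ha hz] at this

section PseudoHyperbolic

variable {γ u : ℂ} {c : ℝ}

lemma norm_one_sub_conj_mul_le (hγ : ‖γ‖ ≤ 1) :
    ‖1 - conj γ * u‖ ≤ 2 * (1 - ‖γ‖) + ‖u - γ‖ := by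
  have hγγ : ‖1 - conj γ * γ‖ = 1 - ‖γ‖ ^ 2 := by
    rw [mul_comm, mul_conj', ← ofReal_pow, ← ofReal_one, ← ofReal_sub, norm_real,
      Real.norm_of_nonneg (by nlinarith [norm_nonneg γ])]
  have hγu : ‖conj γ * (γ - u)‖ ≤ ‖u - γ‖ := by
    rw [norm_mul, RCLike.norm_conj, norm_sub_rev]
    exact mul_le_of_le_one_left (norm_nonneg _) hγ
  calc ‖1 - conj γ * u‖ = ‖(1 - conj γ * γ) + conj γ * (γ - u)‖ := by ring_nf
    _ ≤ (1 - ‖γ‖ ^ 2) + ‖u - γ‖ := hγγ ▸ (norm_add_le _ _).trans (by linarith)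
    _ ≤ 2 * (1 - ‖γ‖) + ‖u - γ‖ := by nlinarith [norm_nonneg γ]

variable (hγ : ‖γ‖ < 1) (hu : ‖u‖ < 1) (hc : 0 ≤ c) (hρ : ‖mobius γ u‖ ≤ c)
include hγ hu hc hρ

lemma one_sub_mul_norm_sub_le_of_norm_mobius_le : (1 - c) * ‖u - γ‖ ≤ 2 * c * (1 - ‖γ‖) := by
  have h := (norm_sub_le_mul_of_norm_mobius_le hγ hu hρ).trans
    (mul_le_mul_of_nonneg_left (norm_one_sub_conj_mul_le (u := u) hγ.le) hc)
  linarith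

lemma one_sub_sq_mul_one_sub_norm_le_of_norm_mobius_le :
    (1 - c ^ 2) * (1 - ‖γ‖) ≤ 4 * (1 - ‖u‖) := by
  have hρ' := norm_sub_le_mul_of_norm_mobius_le hγ hu hρ
  have hlow := one_sub_norm_le_norm_one_sub_conj_mul (a := γ) hu.le
  have key := norm_one_sub_conj_mul_sq_sub_norm_sub_sq γ u
  have hsq : ‖u - γ‖ ^ 2 ≤ c ^ 2 * ‖1 - conj γ * u‖ ^ 2 := by
    rw [← mul_pow]
    exact pow_le_pow_left₀ (norm_nonneg _) hρ' 2
  have hD : 0 < 1 - ‖γ‖ := by linarith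
  rcases lt_or_ge 1 c with hc1 | hc1
  · nlinarith [mul_pos (by nlinarith : 0 < c ^ 2 - 1) hD]
  have hprod : (1 - c ^ 2) * (1 - ‖γ‖) ^ 2 ≤ 4 * (1 - ‖γ‖) * (1 - ‖u‖) :=
    calc (1 - c ^ 2) * (1 - ‖γ‖) ^ 2 ≤ (1 - c ^ 2) * ‖1 - conj γ * u‖ ^ 2 := by
          gcongr
          nlinarith
      _ ≤ (1 - ‖γ‖ ^ 2) * (1 - ‖u‖ ^ 2) := by linarith
      _ = (1 - ‖γ‖) * (1 - ‖u‖) * ((1 + ‖γ‖) * (1 + ‖u‖)) := by ring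
      _ ≤ (1 - ‖γ‖) * (1 - ‖u‖) * (2 * 2) := by
          have := sub_nonneg.mpr hu.le
          gcongr <;> linarith
      _ = 4 * (1 - ‖γ‖) * (1 - ‖u‖) := by ring
  nlinarith

end PseudoHyperbolic

lemma cos_mul_norm_le_re_of_abs_arg_le {v : ℂ} {θ : ℝ} (hθ : θ ≤ Real.pi) (h : |arg v| ≤ θ) :
    Real.cos θ * ‖v‖ ≤ v.re := by
  rw [← norm_mul_cos_arg, ← Real.cos_abs (arg v), mul_comm]
  exact mul_le_mul_of_nonneg_left
    (Real.cos_le_cos_of_nonneg_of_le_pi (abs_nonneg _) hθ h) (norm_nonneg v)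

lemma mul_norm_le_re_of_le {v : ℂ} {ε ε' : ℝ} (hε : ε ≤ ε') (h : ε' * ‖v‖ ≤ v.re) :
    ε * ‖v‖ ≤ v.re :=
  (mul_le_mul_of_nonneg_right hε (norm_nonneg v)).trans h

lemma abs_arg_le_arccos_of_mul_norm_le_re {v : ℂ} {ε : ℝ} (h : ε * ‖v‖ ≤ v.re) :
    |arg v| ≤ Real.arccos ε := by
  rcases eq_or_ne v 0 with rfl | hv
  · simpa using Real.arccos_nonneg ε
  have hε : ε ≤ Real.cos |arg v| := by
    rwa [Real.cos_abs, cos_arg hv, le_div_iff₀ (norm_pos_iff.mpr hv)]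
  calc |arg v| = Real.arccos (Real.cos |arg v|) :=
        (Real.arccos_cos (abs_nonneg _) (abs_arg_le_pi v)).symm
    _ ≤ Real.arccos ε := Real.arccos_le_arccos hε

lemma exists_abs_arg_lt_of_mul_norm_le_re {ι : Type*} {S : Set ι} {v : ι → ℂ} {ε : ℝ}
    (hε : 0 < ε) (h : ∀ i ∈ S, ε * ‖v i‖ ≤ (v i).re) :
    ∃ α, 0 < α ∧ α < Real.pi / 2 ∧ ∀ i ∈ S, |arg (v i)| < α := by
  have hlt : Real.arccos ε < Real.pi / 2 := Real.arccos_lt_pi_div_two.mpr hε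
  refine ⟨(Real.arccos ε + Real.pi / 2) / 2, by linarith [Real.arccos_nonneg ε], by linarith,
    fun i hi => (abs_arg_le_arccos_of_mul_norm_le_re (h i hi)).trans_lt (by linarith)⟩

/-- The bounds `re (w + δ) ≥ a ‖w‖ - ‖δ‖` and `re (w + δ) ≥ b ‖δ‖` combine, since
`‖w + δ‖ ≤ ‖w‖ + ‖δ‖`. -/
lemma mul_norm_add_le_re_add {w δ : ℂ} {a b : ℝ} (ha : 0 ≤ a) (ha1 : a ≤ 1) (hb : 0 < b)
    (hw : a * ‖w‖ ≤ w.re) (hδ : b * ‖δ‖ ≤ (w + δ).re) :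
    a * b / (2 * (1 + b)) * ‖w + δ‖ ≤ (w + δ).re := by
  have hre : w.re - ‖δ‖ ≤ (w + δ).re := by
    rw [add_re]
    linarith [neg_le_of_abs_le (abs_re_le_norm δ)]
  have hw' : a * b * ‖w‖ ≤ (1 + b) * (w + δ).re := by
    nlinarith [mul_le_mul_of_nonneg_left (hw.trans (by linarith : w.re ≤ (w + δ).re + ‖δ‖)) hb.le]
  have hδ' : a * b * ‖δ‖ ≤ (1 + b) * (w + δ).re := by
    nlinarith [mul_le_mul_of_nonneg_right (by linarith : a ≤ 1 + b)
      (mul_nonneg hb.le (norm_nonneg δ))]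
  have hsum : a * b * ‖w + δ‖ ≤ 2 * (1 + b) * (w + δ).re := by
    nlinarith [mul_le_mul_of_nonneg_left (norm_add_le w δ) (mul_nonneg ha hb.le)]
  rw [div_mul_eq_mul_div, div_le_iff₀ (by positivity)]
  linarith

section StolzAngle

variable {τ : ℂ}

lemma one_sub_norm_le_re_one_sub_conj_mul (hτ : ‖τ‖ = 1) (u : ℂ) :
    1 - ‖u‖ ≤ (1 - conj τ * u).re := by
  have h := re_le_norm (conj τ * u)
  rw [norm_mul, RCLike.norm_conj, hτ, one_mul] at h
  rw [sub_re, one_re]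
  linarith

lemma one_sub_norm_div_two_mul_norm_le_re (hτ : ‖τ‖ = 1) {u : ℂ} (hu : ‖u‖ ≤ 1) :
    (1 - ‖u‖) / 2 * ‖1 - conj τ * u‖ ≤ (1 - conj τ * u).re := by
  have hle : ‖1 - conj τ * u‖ ≤ 2 := by
    calc ‖1 - conj τ * u‖ ≤ ‖(1 : ℂ)‖ + ‖conj τ * u‖ := norm_sub_le _ _
      _ ≤ 2 := by rw [norm_one, norm_mul, RCLike.norm_conj, hτ]; linarith
  nlinarith [one_sub_norm_le_re_one_sub_conj_mul hτ u]

/-- For `v = 1 - conj τ * w`, the condition `a ‖v‖ ≤ re v` says that `w` lies in the Stolz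
angle `|arg v| ≤ arccos a`; the pseudo-hyperbolic `c`-neighbourhood of that angle lies in a
wider one. -/
lemma exists_mul_norm_le_re_of_norm_mobius_le (hτ : ‖τ‖ = 1) {a c : ℝ} (ha : 0 < a) (ha1 : a ≤ 1)
    (hc : 0 ≤ c) (hc1 : c < 1) :
    ∃ ε > 0, ∀ γ u : ℂ, ‖γ‖ < 1 → ‖u‖ < 1 → ‖mobius γ u‖ ≤ c →
      a * ‖1 - conj τ * γ‖ ≤ (1 - conj τ * γ).re →
      ε * ‖1 - conj τ * u‖ ≤ (1 - conj τ * u).re := by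
  -- `b = (1 - c) ^ 2 / 8` is the constant for which `hA` and `hB` give `b ‖u - γ‖ ≤ 1 - ‖u‖`.
  have hb : 0 < (1 - c) ^ 2 / 8 := by nlinarith
  refine ⟨a * ((1 - c) ^ 2 / 8) / (2 * (1 + (1 - c) ^ 2 / 8)), by positivity,
    fun γ u hγ hu hρ hsector => ?_⟩
  have hnorm : ‖conj τ * (γ - u)‖ = ‖u - γ‖ := by
    rw [norm_mul, RCLike.norm_conj, hτ, one_mul, norm_sub_rev]
  have hsplit : 1 - conj τ * u = (1 - conj τ * γ) + conj τ * (γ - u) := by ring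
  have hA := one_sub_mul_norm_sub_le_of_norm_mobius_le hγ hu hc hρ
  have hB := one_sub_sq_mul_one_sub_norm_le_of_norm_mobius_le hγ hu hc hρ
  have hδ : (1 - c) ^ 2 / 8 * ‖conj τ * (γ - u)‖ ≤ (1 - conj τ * u).re := by
    rw [hnorm]
    have : (1 - c) ^ 2 * ‖u - γ‖ ≤ 8 * (1 - ‖u‖) := by
      nlinarith [mul_le_mul_of_nonneg_left hA (by linarith : (0 : ℝ) ≤ 1 - c)]
    linarith [one_sub_norm_le_re_one_sub_conj_mul hτ u]
  rw [hsplit] at hδ ⊢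
  exact mul_norm_add_le_re_add ha.le ha1 hb hsector hδ

lemma tendsto_of_norm_mobius_le {ι : Type*} {l : Filter ι} {f g : ι → ℂ} {c : ℝ}
    (hτ : ‖τ‖ = 1) (hc : 0 ≤ c) (hc1 : c < 1) (hf : Tendsto f l (𝓝 τ))
    (hfg : ∀ᶠ i in l, ‖f i‖ < 1 ∧ ‖g i‖ < 1 ∧ ‖mobius (f i) (g i)‖ ≤ c) :
    Tendsto g l (𝓝 τ) := by
  have hbound : Tendsto (fun i => 2 * c / (1 - c) * (1 - ‖f i‖)) l (𝓝 0) := by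
    simpa [hτ] using (hf.norm.const_sub 1).const_mul (2 * c / (1 - c))
  have hdiff : Tendsto (fun i => g i - f i) l (𝓝 0) := by
    refine squeeze_zero_norm' (hfg.mono fun i ⟨hfi, hgi, hρ⟩ => ?_) hbound
    rw [div_mul_eq_mul_div, le_div_iff₀ (by linarith), mul_comm]
    linarith [one_sub_mul_norm_sub_le_of_norm_mobius_le hfi hgi hc hρ]
  simpa using hf.add hdiff

namespace EvolutionFamilyDisk

variable (E : EvolutionFamilyDisk τ)

/-- `ξ ↦ G(φ_{a,ξ}(z), ξ)`, the integrand of `integral_eq`. -/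
noncomputable def trajectoryField (a : ℝ) (z : ℂ) (ξ : ℝ) : ℂ :=
  (E.φ a ξ z - τ) * (conj τ * E.φ a ξ z - 1) * E.p (E.φ a ξ z) ξ

variable {E} {a b : ℝ} {z : ℂ}

lemma φ_eq_add_integral (ha : 0 ≤ a) {u v : ℝ} (hau : a ≤ u) (huv : u ≤ v) (hz : z ∈ UD) :
    E.φ a v z = E.φ a u z + ∫ ξ in u..v, E.trajectoryField a z ξ := by
  rw [E.comp ha hau huv z hz, E.integral_eq (ha.trans hau) huv _ (E.mapsTo ha hau hz)]
  congr 1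
  refine intervalIntegral.integral_congr fun ξ hξ => ?_
  rw [uIcc_of_le huv] at hξ
  simp only [trajectoryField, ← E.comp ha hau hξ.1 z hz]

lemma continuousOn_φ (ha : 0 ≤ a) (hab : a ≤ b) (hz : z ∈ UD)
    (hI : IntervalIntegrable (E.trajectoryField a z) volume a b) :
    ContinuousOn (fun t => E.φ a t z) (Icc a b) := by
  rw [← uIcc_of_le hab]
  refine ((continuousOn_const (c := z)).add
    (intervalIntegral.continuousOn_primitive_interval' hI left_mem_uIcc)).congr fun t ht => ?_
  rw [uIcc_of_le hab] at ht
  exact E.integral_eq ha ht.1 z hz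

lemma norm_mobius_φ_le {s s' u t : ℝ} {z' : ℂ} (hs : 0 ≤ s) (hs' : 0 ≤ s') (hsu : s ≤ u)
    (hs'u : s' ≤ u) (hut : u ≤ t) (hz : z ∈ UD) (hz' : z' ∈ UD) :
    ‖mobius (E.φ s t z) (E.φ s' t z')‖ ≤ ‖mobius (E.φ s u z) (E.φ s' u z')‖ := by
  rw [E.comp hs hsu hut z hz, E.comp hs' hs'u hut z' hz']
  exact norm_mobius_le_of_mapsTo (E.holo (hs.trans hsu) hut) (E.mapsTo (hs.trans hsu) hut)
    (E.mapsTo hs hsu hz) (E.mapsTo hs' hs'u hz')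

/-- If the vector field is not integrable along the trajectory, the integrals in `integral_eq`
are `0` by convention and every `φ_{a,t}(z)`, `t ∈ [a, b]`, equals `z` or `φ_{a,b}(z)`. -/
lemma exists_norm_le_of_mem_Icc (ha : 0 ≤ a) (hab : a ≤ b) (hz : z ∈ UD) :
    ∃ r < 1, ∀ t ∈ Icc a b, ‖E.φ a t z‖ ≤ r := by
  by_cases hI : IntervalIntegrable (E.trajectoryField a z) volume a b
  · obtain ⟨t₀, ht₀, hmax⟩ := isCompact_Icc.exists_isMaxOn (nonempty_Icc.mpr hab)
      (continuous_norm.comp_continuousOn (E.continuousOn_φ ha hab hz hI))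
    exact ⟨_, E.mapsTo ha ht₀.1 hz, fun t ht => hmax ht⟩
  refine ⟨max ‖z‖ ‖E.φ a b z‖, max_lt hz (E.mapsTo ha hab hz), fun t ht => ?_⟩
  by_cases hIt : IntervalIntegrable (E.trajectoryField a z) volume a t
  · have hItb : ¬IntervalIntegrable (E.trajectoryField a z) volume t b :=
      fun h => hI (hIt.trans h)
    have h := E.φ_eq_add_integral ha ht.1 ht.2 hz
    rw [intervalIntegral.integral_undef hItb, add_zero] at h
    rw [← h]
    exact le_max_right _ _
  · have h := E.φ_eq_add_integral ha le_rfl ht.1 hz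
    rw [intervalIntegral.integral_undef hIt, add_zero, E.id_eq ha z hz] at h
    rw [h]
    exact le_max_left _ _

end EvolutionFamilyDisk

theorem convergesNonTangentially_of_convergesNonTangentially (hτ : ‖τ‖ = 1)
    {E : EvolutionFamilyDisk τ} {s s' : ℝ} {z z' : ℂ} (hs : 0 ≤ s) (hz : z ∈ UD)
    (hs' : 0 ≤ s') (hz' : z' ∈ UD) (h : ConvergesNonTangentially E s z) :
    ConvergesNonTangentially E s' z' := by
  obtain ⟨htend, α, hα0, hαπ, hstolz⟩ := h
  set s₀ := max s s'
  have hss₀ : s ≤ s₀ := le_max_left _ _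
  have hs's₀ : s' ≤ s₀ := le_max_right _ _
  set c := ‖mobius (E.φ s s₀ z) (E.φ s' s₀ z')‖
  have hc1 : c < 1 := norm_mobius_lt_one (E.mapsTo hs hss₀ hz) (E.mapsTo hs' hs's₀ hz')
  have hclose : ∀ t, s₀ ≤ t →
      ‖E.φ s t z‖ < 1 ∧ ‖E.φ s' t z'‖ < 1 ∧ ‖mobius (E.φ s t z) (E.φ s' t z')‖ ≤ c := by
    intro t ht
    exact ⟨E.mapsTo hs (hss₀.trans ht) hz, E.mapsTo hs' (hs's₀.trans ht) hz',
      E.norm_mobius_φ_le hs hs' hss₀ hs's₀ ht hz hz'⟩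
  obtain ⟨ε, hε, hfar⟩ := exists_mul_norm_le_re_of_norm_mobius_le hτ
    (Real.cos_pos_of_mem_Ioo ⟨by linarith, hαπ⟩) (Real.cos_le_one α) (norm_nonneg _) hc1
  obtain ⟨r, hr1, hnear⟩ := E.exists_norm_le_of_mem_Icc hs' hs's₀ hz'
  have hsector : ∀ t ∈ Ici s', min ε ((1 - r) / 2) * ‖1 - conj τ * E.φ s' t z'‖ ≤
      (1 - conj τ * E.φ s' t z').re := by
    intro t ht
    rcases le_total s₀ t with hst | hts
    · obtain ⟨hγt, hβt, hρ⟩ := hclose t hst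
      have hγ_sector := cos_mul_norm_le_re_of_abs_arg_le (by linarith [Real.pi_pos])
        (hstolz t (hss₀.trans hst)).le
      exact mul_norm_le_re_of_le (min_le_left _ _) (hfar _ _ hγt hβt hρ hγ_sector)
    · have hr := hnear t ⟨ht, hts⟩
      exact mul_norm_le_re_of_le ((min_le_right _ _).trans (by linarith))
        (one_sub_norm_div_two_mul_norm_le_re hτ (hr.trans hr1.le))
  exact ⟨tendsto_of_norm_mobius_le hτ (norm_nonneg _) hc1 htend
    (eventually_atTop.mpr ⟨s₀, hclose⟩),
    exists_abs_arg_lt_of_mul_norm_le_re (lt_min hε (by linarith)) hsector⟩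

end StolzAngle

theorem nontangential_convergence_iff_general (τ : ℂ) (hτ : ‖τ‖ = 1)
    (E : EvolutionFamilyDisk τ) :
    (∃ z ∈ UD, ∃ s : ℝ, 0 ≤ s ∧ ConvergesNonTangentially E s z) ↔
    (∀ z ∈ UD, ∀ s : ℝ, 0 ≤ s → ConvergesNonTangentially E s z) := by
  have h0 : (0 : ℂ) ∈ UD := by simp [UD]
  exact ⟨fun ⟨z, hz, s, hs, h⟩ z' hz' s' hs' =>
      convergesNonTangentially_of_convergesNonTangentially hτ hs hz hs' hz' h,
    fun h => ⟨0, h0, 0, le_rfl, h 0 h0 0 le_rfl⟩⟩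

/-- For a non-trivial evolution family in `𝔻` with common Denjoy-Wolff point
`τ ∈ ∂𝔻`, some trajectory converges to `τ` non-tangentially if and only if every
trajectory converges to `τ` non-tangentially. -/
theorem nontangential_convergence_iff (τ : ℂ) (hτ : ‖τ‖ = 1)
    (E : EvolutionFamilyDisk τ) (hE : E.Nontrivial) :
    (∃ z ∈ UD, ∃ s : ℝ, 0 ≤ s ∧ ConvergesNonTangentially E s z) ↔
    (∀ z ∈ UD, ∀ s : ℝ, 0 ≤ s → ConvergesNonTangentially E s z) :=
  nontangential_convergence_iff_general τ hτ E
end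

section
/- For every α ∈ (0, π/2) and every R > 0 there exists β ∈ (0, π/2) such that: whenever c, w ∈ ℍ = {u ∈ ℂ : Re u > 0} satisfy |Im c| ≤ tan(α)·Re c and ρ_ℍ(c, w) ≤ R, one has |Im w| ≤ tan(β)·Re w. In other words, every hyperbolic R-neighbourhood of a Stolz angle in ℍ at the origin with half-opening α is contained in a Stolz angle with half-opening β. -/
open Complex Set
open scoped ComplexConjugate

/-- The hyperbolic (Poincaré) distance of the right half-plane
`ρ_ℍ(w₁,w₂) = 2·artanh|(w₁−w₂)/(w₁+conj w₂)| = log((1+d)/(1−d))` where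
`d = |(w₁−w₂)/(w₁+conj w₂)|`. -/
noncomputable def rhoH (w₁ w₂ : ℂ) : ℝ :=
  Real.log ((1 + ‖(w₁ - w₂) / (w₁ + (starRingEnd ℂ) w₂)‖) /
    (1 - ‖(w₁ - w₂) / (w₁ + (starRingEnd ℂ) w₂)‖))

/-!
If `ρ_ℍ(c, w) ≤ R` then `|c − w| ≤ t·|c + w̄|` with `t = tanh(R/2) < 1`. In coordinates
`c = a + ib`, `w = x + iy` this reads `(a − x)² + (b − y)² ≤ t²((a + x)² + (b − y)²)`, which
forces both `a ≤ (1+t)/(1−t) · x` and `|b − y| ≤ t/(1−t²) · (a + x)`: the real parts are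
comparable and the imaginary parts differ by at most a multiple of them. Hence
`|y| ≤ |b| + |b − y|` is bounded by a fixed multiple of `x` once `|b| ≤ tan α · a`.
-/

lemma Real.le_of_log_one_add_div_one_sub_le {d R : ℝ} (hd₀ : -1 < d) (hd₁ : d < 1)
    (h : Real.log ((1 + d) / (1 - d)) ≤ R) :
    d ≤ (Real.exp R - 1) / (Real.exp R + 1) := by
  have hratio : (1 + d) / (1 - d) ≤ Real.exp R :=
    (Real.log_le_iff_le_exp (div_pos (by linarith) (by linarith))).mp h
  rw [div_le_iff₀ (by linarith)] at hratio
  rw [le_div_iff₀ (by positivity)]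
  linarith

section CoordinateBounds

variable {a b x y t : ℝ}

lemma one_sub_mul_le_one_add_mul (hax : 0 ≤ a + x) (ht₀ : 0 ≤ t) (ht₁ : t ≤ 1)
    (h : (a - x) ^ 2 + (b - y) ^ 2 ≤ t ^ 2 * ((a + x) ^ 2 + (b - y) ^ 2)) :
    (1 - t) * a ≤ (1 + t) * x := by
  have ht : t ^ 2 ≤ 1 := by nlinarith
  have hsq : (a - x) ^ 2 ≤ (t * (a + x)) ^ 2 := by
    nlinarith [mul_le_of_le_one_left (sq_nonneg (b - y)) ht]
  linarith [(abs_le_of_sq_le_sq' hsq (by positivity)).2]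

lemma one_sub_sq_mul_abs_sub_le (hax : 0 ≤ a + x) (ht₀ : 0 ≤ t) (ht₁ : t < 1)
    (h : (a - x) ^ 2 + (b - y) ^ 2 ≤ t ^ 2 * ((a + x) ^ 2 + (b - y) ^ 2)) :
    (1 - t ^ 2) * |b - y| ≤ t * (a + x) := by
  have h1t2 : 0 ≤ 1 - t ^ 2 := by nlinarith
  have hsq : ((1 - t ^ 2) * |b - y|) ^ 2 ≤ (t * (a + x)) ^ 2 := by
    rw [mul_pow, sq_abs]
    nlinarith [sq_nonneg (a - x),
      mul_le_of_le_one_left (sq_nonneg (b - y)) (by nlinarith : 1 - t ^ 2 ≤ 1)]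
  exact abs_le_of_sq_le_sq hsq (by positivity) |>.trans' (le_abs_self _)

end CoordinateBounds

namespace Complex

lemma sq_norm_sub_eq (c w : ℂ) :
    ‖c - w‖ ^ 2 = (c.re - w.re) ^ 2 + (c.im - w.im) ^ 2 := by
  rw [Complex.sq_norm, normSq_apply, sub_re, sub_im]
  ring

lemma sq_norm_add_conj_eq (c w : ℂ) :
    ‖c + conj w‖ ^ 2 = (c.re + w.re) ^ 2 + (c.im - w.im) ^ 2 := by
  rw [Complex.sq_norm, normSq_apply, add_re, add_im, conj_re, conj_im]
  ring

lemma norm_sub_lt_norm_add_conj {c w : ℂ} (hc : 0 < c.re) (hw : 0 < w.re) :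
    ‖c - w‖ < ‖c + conj w‖ := by
  refine lt_of_pow_lt_pow_left₀ 2 (norm_nonneg _) ?_
  rw [sq_norm_sub_eq, sq_norm_add_conj_eq]
  nlinarith [mul_pos hc hw]

lemma norm_sub_div_add_conj_lt_one {c w : ℂ} (hc : 0 < c.re) (hw : 0 < w.re) :
    ‖(c - w) / (c + conj w)‖ < 1 := by
  have hpos : 0 < ‖c + conj w‖ := (norm_nonneg _).trans_lt (norm_sub_lt_norm_add_conj hc hw)
  rw [norm_div, div_lt_one hpos]
  exact norm_sub_lt_norm_add_conj hc hw

lemma abs_im_le_of_norm_sub_le {c w : ℂ} {s t : ℝ} (hc : 0 ≤ c.re) (hw : 0 ≤ w.re)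
    (hs : 0 ≤ s) (ht₀ : 0 ≤ t) (ht₁ : t < 1) (hcs : |c.im| ≤ s * c.re)
    (h : ‖c - w‖ ≤ t * ‖c + conj w‖) :
    |w.im| ≤ (s * ((1 + t) / (1 - t)) + 2 * t / (1 - t) / (1 - t ^ 2)) * w.re := by
  have hsq : (c.re - w.re) ^ 2 + (c.im - w.im) ^ 2
      ≤ t ^ 2 * ((c.re + w.re) ^ 2 + (c.im - w.im) ^ 2) := by
    rw [← sq_norm_sub_eq, ← sq_norm_add_conj_eq, ← mul_pow]
    exact pow_le_pow_left₀ (norm_nonneg _) h 2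
  have hre := one_sub_mul_le_one_add_mul (add_nonneg hc hw) ht₀ ht₁.le hsq
  have him := one_sub_sq_mul_abs_sub_le (add_nonneg hc hw) ht₀ ht₁ hsq
  have h1t : 0 < 1 - t := by linarith
  have h1t2 : 0 < 1 - t ^ 2 := by nlinarith
  have hc_re : c.re ≤ (1 + t) / (1 - t) * w.re := by
    rw [div_mul_eq_mul_div, le_div_iff₀ h1t]
    linarith
  have hsum : c.re + w.re ≤ 2 * w.re / (1 - t) := by
    rw [le_div_iff₀ h1t]
    linarith
  calc |w.im| ≤ |c.im| + |c.im - w.im| := by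
        linarith [abs_sub_abs_le_abs_sub w.im c.im, abs_sub_comm w.im c.im]
    _ ≤ s * c.re + t * (c.re + w.re) / (1 - t ^ 2) :=
        add_le_add hcs ((le_div_iff₀' h1t2).mpr him)
    _ ≤ s * ((1 + t) / (1 - t) * w.re) + t * (2 * w.re / (1 - t)) / (1 - t ^ 2) := by
        gcongr
    _ = (s * ((1 + t) / (1 - t)) + 2 * t / (1 - t) / (1 - t ^ 2)) * w.re := by ring

end Complex

lemma norm_sub_le_of_rhoH_le {c w : ℂ} {R : ℝ} (hc : 0 < c.re) (hw : 0 < w.re)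
    (h : rhoH c w ≤ R) :
    ‖c - w‖ ≤ (Real.exp R - 1) / (Real.exp R + 1) * ‖c + conj w‖ := by
  have hd := Real.le_of_log_one_add_div_one_sub_le
    ((neg_lt_zero.mpr one_pos).trans_le (norm_nonneg _))
    (norm_sub_div_add_conj_lt_one hc hw) h
  have hpos : 0 < ‖c + conj w‖ := (norm_nonneg _).trans_lt (norm_sub_lt_norm_add_conj hc hw)
  rwa [norm_div, div_le_iff₀ hpos] at hd

/-- Every hyperbolic `R`-neighbourhood of a Stolz angle in `ℍ = {Re > 0}` at the origin
with half-opening `α < π/2` is contained in a Stolz angle with half-opening `β < π/2`: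
if `|Im c| ≤ tan α · Re c` and `ρ_ℍ(c,w) ≤ R` then `|Im w| ≤ tan β · Re w`. -/
theorem stolz_angle_hyperbolic_neighbourhood :
    ∀ α : ℝ, 0 < α → α < Real.pi / 2 → ∀ R : ℝ, 0 < R →
      ∃ β : ℝ, 0 < β ∧ β < Real.pi / 2 ∧
        ∀ c w : ℂ, 0 < c.re → 0 < w.re →
          |c.im| ≤ Real.tan α * c.re → rhoH c w ≤ R →
          |w.im| ≤ Real.tan β * w.re := by
  intro α hα hα' R hR
  set t := (Real.exp R - 1) / (Real.exp R + 1)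
  have hexp : 1 < Real.exp R := Real.one_lt_exp_iff.mpr hR
  have ht₀ : 0 ≤ t := div_nonneg (by linarith) (by positivity)
  have ht₁ : t < 1 := (div_lt_one (by positivity)).mpr (by linarith)
  have hs : 0 < Real.tan α := Real.tan_pos_of_pos_of_lt_pi_div_two hα hα'
  refine ⟨Real.arctan (Real.tan α * ((1 + t) / (1 - t)) + 2 * t / (1 - t) / (1 - t ^ 2)),
    Real.arctan_pos.mpr ?_, Real.arctan_lt_pi_div_two _, ?_⟩
  · have : 0 < 1 - t ^ 2 := by nlinarith
    have : 0 < 1 - t := by linarith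
    positivity
  intro c w hc hw hcα hρ
  rw [Real.tan_arctan]
  exact abs_im_le_of_norm_sub_le hc.le hw.le hs.le ht₀ ht₁ hcα (norm_sub_le_of_rhoH_le hc hw hρ)
end

section
/- For 0 ≤ s ≤ t and z ∈ 𝔻 define φ_{s,t}(z) := 1 + (z − 1)/(1 − (z − 1)·(t − s + i·(sin t − sin s))). Then: each φ_{s,t} is a well-defined holomorphic self-map of 𝔻 (the denominator never vanishes for z ∈ 𝔻); the family (φ_{s,t}) is an evolution family in 𝔻 (it satisfies φ_{s,s} = id_𝔻, the composition law φ_{s,t} = φ_{u,t} ∘ φ_{s,u} for 0 ≤ s ≤ u ≤ t, and the local absolute-continuity condition); and for every s ≥ 0, φ_{s,t} → 1 (the constant map equal to 1) uniformly on compact subsets of 𝔻 as t → +∞. -/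
open Complex MeasureTheory Set Filter Topology

/-!
The coordinate `w = (z - 1)⁻¹` maps `𝔻` onto the half-plane `re w < -1/2`, and in this
coordinate `φ_{s,t}` is the translation `w ↦ w - (F t - F s)` with `F t = t + i sin t`.
Since `re (F t - F s) = t - s ≥ 0`, every translate stays in the half-plane, the translations
compose additively, and `‖φ_{s,t} z - 1‖ = ‖w - (F t - F s)‖⁻¹ ≤ (1/2 + t - s)⁻¹`, which gives
the uniform convergence to `1`. Writing `φ_{s,u} z - φ_{s,t} z` as `v₁ v₂ (v₂⁻¹ - v₁⁻¹)` with
`vᵢ` the displacements from `1` (each of norm at most `2`) shows that `u ↦ φ_{s,u} z` is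
`8`-Lipschitz, because `F` is `2`-Lipschitz.
-/

/-- In the coordinate `(z - 1)⁻¹` this map is the translation by `-c`. -/
noncomputable def parabolicMap (c z : ℂ) : ℂ := 1 + (z - 1) / (1 - (z - 1) * c)

noncomputable def drivingFunction (t : ℝ) : ℂ := t + I * Real.sin t

lemma norm_lt_one_iff_re_inv_sub_one_lt (z : ℂ) : ‖z‖ < 1 ↔ ((z - 1)⁻¹).re < -(1 / 2) := by
  rcases eq_or_ne z 1 with rfl | hz
  · norm_num
  have hn : 0 < normSq (z - 1) := normSq_pos.2 (sub_ne_zero.2 hz)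
  rw [inv_re, div_lt_iff₀ hn, ← sq_lt_one_iff₀ (norm_nonneg z), Complex.sq_norm]
  simp only [normSq_apply, sub_re, sub_im, one_re, one_im]
  constructor <;> intro h <;> nlinarith

lemma ne_one_of_norm_lt_one {z : ℂ} (hz : ‖z‖ < 1) : z ≠ 1 := by
  rintro rfl
  simp at hz

lemma inv_parabolicMap_sub_one {z : ℂ} (hz : z ≠ 1) (c : ℂ) :
    (parabolicMap c z - 1)⁻¹ = (z - 1)⁻¹ - c := by
  rw [parabolicMap, add_sub_cancel_left, inv_div, sub_div, one_div,
    mul_div_cancel_left₀ _ (sub_ne_zero.2 hz)]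

section UnitDisk

variable {c z : ℂ}

lemma re_inv_parabolicMap_sub_one_lt (hz : ‖z‖ < 1) (c : ℂ) :
    ((parabolicMap c z - 1)⁻¹).re < -(1 / 2) - c.re := by
  rw [inv_parabolicMap_sub_one (ne_one_of_norm_lt_one hz), sub_re]
  linarith [(norm_lt_one_iff_re_inv_sub_one_lt z).1 hz]

lemma norm_parabolicMap_lt_one (hz : ‖z‖ < 1) (hc : 0 ≤ c.re) : ‖parabolicMap c z‖ < 1 := by
  rw [norm_lt_one_iff_re_inv_sub_one_lt]
  linarith [re_inv_parabolicMap_sub_one_lt hz c]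

/-- If the denominator vanished, `parabolicMap c z` would be `1` and its coordinate `0`. -/
lemma one_sub_mul_ne_zero (hz : ‖z‖ < 1) (hc : 0 ≤ c.re) : 1 - (z - 1) * c ≠ 0 := by
  intro h
  have := re_inv_parabolicMap_sub_one_lt hz c
  rw [parabolicMap, h, div_zero, add_sub_cancel_left, inv_zero, zero_re] at this
  linarith

lemma lt_norm_inv_parabolicMap_sub_one (hz : ‖z‖ < 1) (c : ℂ) :
    1 / 2 + c.re < ‖(parabolicMap c z - 1)⁻¹‖ :=
  calc 1 / 2 + c.re < -((parabolicMap c z - 1)⁻¹).re := by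
        linarith [re_inv_parabolicMap_sub_one_lt hz c]
    _ ≤ ‖(parabolicMap c z - 1)⁻¹‖ := (neg_le_abs _).trans (abs_re_le_norm _)

lemma parabolicMap_sub_one_ne_zero (hz : ‖z‖ < 1) (hc : 0 ≤ c.re) :
    parabolicMap c z - 1 ≠ 0 := by
  intro h
  have := lt_norm_inv_parabolicMap_sub_one hz c
  rw [h, inv_zero, norm_zero] at this
  linarith

lemma norm_parabolicMap_sub_one_le (hz : ‖z‖ < 1) (hc : 0 ≤ c.re) :
    ‖parabolicMap c z - 1‖ ≤ (1 / 2 + c.re)⁻¹ := by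
  rw [← inv_inv (parabolicMap c z - 1), norm_inv]
  exact inv_anti₀ (by positivity) (lt_norm_inv_parabolicMap_sub_one hz c).le

lemma norm_parabolicMap_sub_one_le_two (hz : ‖z‖ < 1) (hc : 0 ≤ c.re) :
    ‖parabolicMap c z - 1‖ ≤ 2 :=
  (norm_parabolicMap_sub_one_le hz hc).trans <| by
    rw [inv_le_comm₀ (by positivity) two_pos]
    linarith

lemma norm_parabolicMap_sub_parabolicMap_le {c₁ c₂ : ℂ} (hz : ‖z‖ < 1) (hc₁ : 0 ≤ c₁.re)
    (hc₂ : 0 ≤ c₂.re) : ‖parabolicMap c₁ z - parabolicMap c₂ z‖ ≤ 4 * ‖c₁ - c₂‖ := by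
  set v₁ := parabolicMap c₁ z - 1
  set v₂ := parabolicMap c₂ z - 1
  have hv₁ : v₁ ≠ 0 := parabolicMap_sub_one_ne_zero hz hc₁
  have hv₂ : v₂ ≠ 0 := parabolicMap_sub_one_ne_zero hz hc₂
  have hdiff : parabolicMap c₁ z - parabolicMap c₂ z = v₁ * v₂ * (v₂⁻¹ - v₁⁻¹) := by
    field_simp
    ring
  rw [hdiff, inv_parabolicMap_sub_one (ne_one_of_norm_lt_one hz),
    inv_parabolicMap_sub_one (ne_one_of_norm_lt_one hz), sub_sub_sub_cancel_left,
    norm_mul, norm_mul]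
  gcongr
  calc ‖v₁‖ * ‖v₂‖ ≤ 2 * 2 :=
        mul_le_mul (norm_parabolicMap_sub_one_le_two hz hc₁)
          (norm_parabolicMap_sub_one_le_two hz hc₂) (norm_nonneg _) two_pos.le
    _ = 4 := by norm_num

lemma parabolicMap_parabolicMap {c₁ : ℂ} (hz : ‖z‖ < 1) (hc₁ : 0 ≤ c₁.re) (c₂ : ℂ) :
    parabolicMap c₂ (parabolicMap c₁ z) = parabolicMap (c₁ + c₂) z := by
  rw [← sub_left_inj (a := (1 : ℂ)), ← inv_inj,
    inv_parabolicMap_sub_one (ne_one_of_norm_lt_one (norm_parabolicMap_lt_one hz hc₁)),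
    inv_parabolicMap_sub_one (ne_one_of_norm_lt_one hz),
    inv_parabolicMap_sub_one (ne_one_of_norm_lt_one hz)]
  ring

lemma differentiableOn_parabolicMap (hc : 0 ≤ c.re) :
    DifferentiableOn ℂ (parabolicMap c) UD := by
  intro z hz
  have := one_sub_mul_ne_zero hz hc
  unfold parabolicMap
  exact DifferentiableAt.differentiableWithinAt (by fun_prop (disch := assumption))

end UnitDisk

lemma tendstoUniformlyOn_parabolicMap {ι : Type*} {l : Filter ι} {c : ι → ℂ}
    (hc : Tendsto (fun i => (c i).re) l atTop) :
    TendstoUniformlyOn (fun i => parabolicMap (c i)) (fun _ => 1) l UD := by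
  rw [Metric.tendstoUniformlyOn_iff]
  intro ε hε
  have hbound : Tendsto (fun i => (1 / 2 + (c i).re)⁻¹) l (𝓝 0) :=
    (tendsto_atTop_add_const_left _ _ hc).inv_tendsto_atTop
  filter_upwards [hc.eventually_ge_atTop 0, hbound.eventually (gt_mem_nhds hε)]
    with i hre hlt z hz
  rw [dist_comm, dist_eq_norm]
  exact (norm_parabolicMap_sub_one_le hz hre).trans_lt hlt

lemma re_drivingFunction_sub (s t : ℝ) :
    (drivingFunction t - drivingFunction s).re = t - s := by
  simp [drivingFunction]

lemma norm_drivingFunction_sub_le (s t : ℝ) :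
    ‖drivingFunction t - drivingFunction s‖ ≤ 2 * |t - s| :=
  calc ‖drivingFunction t - drivingFunction s‖
      = ‖((t - s : ℝ) : ℂ) + I * ((Real.sin t - Real.sin s : ℝ) : ℂ)‖ := by
        simp only [drivingFunction]; push_cast; ring_nf
    _ ≤ |t - s| + |Real.sin t - Real.sin s| := by
        refine (norm_add_le _ _).trans_eq ?_
        rw [norm_mul, norm_I, one_mul, norm_real, norm_real, Real.norm_eq_abs,
          Real.norm_eq_abs]
    _ ≤ 2 * |t - s| := by linarith [Real.abs_sin_sub_sin_le t s]

lemma norm_parabolicMap_drivingFunction_sub_le {s u t : ℝ} (hsu : s ≤ u) (hut : u ≤ t) {z : ℂ}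
    (hz : ‖z‖ < 1) :
    ‖parabolicMap (drivingFunction u - drivingFunction s) z -
      parabolicMap (drivingFunction t - drivingFunction s) z‖ ≤ 8 * (t - u) :=
  calc _ ≤ 4 * ‖drivingFunction u - drivingFunction s - (drivingFunction t - drivingFunction s)‖ :=
        norm_parabolicMap_sub_parabolicMap_le hz
          (by rw [re_drivingFunction_sub]; linarith) (by rw [re_drivingFunction_sub]; linarith)
    _ ≤ 4 * (2 * |u - t|) := by
        rw [sub_sub_sub_cancel_right]
        gcongr
        exact norm_drivingFunction_sub_le t u
    _ = 8 * (t - u) := by rw [abs_sub_comm, abs_of_nonneg (by linarith)]; ring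

/-- The explicit family
`φ_{s,t}(z) = 1 + (z−1)/(1 − (z−1)(t − s + i(sin t − sin s)))` is a well-defined
evolution family of holomorphic self-maps of `𝔻` (nonvanishing denominator, identity at
`t = s`, composition law, local absolute continuity) and, for every `s ≥ 0`,
`φ_{s,t} → 1` uniformly on compact subsets of `𝔻` as `t → +∞`. -/
theorem example_convergence_to_DW_point (φ : ℝ → ℝ → ℂ → ℂ)
    (hφ : ∀ s t : ℝ, ∀ z : ℂ, φ s t z =
      1 + (z - 1) / (1 - (z - 1) * (((t - s : ℝ) : ℂ) +
        Complex.I * ((Real.sin t - Real.sin s : ℝ) : ℂ)))) :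
    (∀ s t : ℝ, 0 ≤ s → s ≤ t → ∀ z ∈ UD,
      (1 - (z - 1) * (((t - s : ℝ) : ℂ) +
        Complex.I * ((Real.sin t - Real.sin s : ℝ) : ℂ))) ≠ 0 ∧
      φ s t z ∈ UD) ∧
    (∀ s t : ℝ, 0 ≤ s → s ≤ t → DifferentiableOn ℂ (φ s t) UD) ∧
    (∀ s : ℝ, 0 ≤ s → ∀ z ∈ UD, φ s s z = z) ∧
    (∀ s u t : ℝ, 0 ≤ s → s ≤ u → u ≤ t → ∀ z ∈ UD,
      φ s t z = φ u t (φ s u z)) ∧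
    (∀ z ∈ UD, ∀ T : ℝ, 0 < T →
      ∃ k : ℝ → ℝ, (∀ ξ, 0 ≤ k ξ) ∧ MeasureTheory.IntegrableOn k (Set.Icc 0 T) ∧
        ∀ s u t : ℝ, 0 ≤ s → s ≤ u → u ≤ t → t ≤ T →
          ‖φ s u z - φ s t z‖ ≤ ∫ ξ in u..t, k ξ) ∧
    (∀ s : ℝ, 0 ≤ s → ∀ K : Set ℂ, K ⊆ UD → IsCompact K →
      TendstoUniformlyOn (fun t z => φ s t z) (fun _ => 1) atTop K) := by
  have hF : ∀ s t : ℝ, ((t - s : ℝ) : ℂ) + I * ((Real.sin t - Real.sin s : ℝ) : ℂ) =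
      drivingFunction t - drivingFunction s :=
    fun s t => by simp only [drivingFunction]; push_cast; ring
  obtain rfl : φ = fun s t => parabolicMap (drivingFunction t - drivingFunction s) := by
    funext s t z
    rw [hφ, hF]
    rfl
  have hre : ∀ s t : ℝ, s ≤ t → 0 ≤ (drivingFunction t - drivingFunction s).re :=
    fun s t h => by rw [re_drivingFunction_sub]; linarith
  simp only [hF]
  refine ⟨fun s t _ hst z hz => ⟨one_sub_mul_ne_zero hz (hre s t hst),
      norm_parabolicMap_lt_one hz (hre s t hst)⟩,
    fun s t _ hst => differentiableOn_parabolicMap (hre s t hst),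
    fun s _ z _ => by simp [parabolicMap],
    fun s u t _ hsu hut z hz => ?_,
    fun z hz T _ => ⟨fun _ => 8, fun _ => by norm_num,
      integrableOn_const measure_Icc_lt_top.ne, fun s u t _ hsu hut _ => ?_⟩,
    fun s _ K hK _ => (tendstoUniformlyOn_parabolicMap ?_).mono hK⟩
  · rw [parabolicMap_parabolicMap hz (hre s u hsu), sub_add_sub_cancel']
  · rw [intervalIntegral.integral_const, smul_eq_mul, mul_comm]
    exact norm_parabolicMap_drivingFunction_sub_le hsu hut hz
  · simp only [re_drivingFunction_sub]
    exact tendsto_atTop_add_const_right _ _ tendsto_id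
end

section
/- For 0 ≤ s ≤ t and z ∈ 𝔻 define φ_{s,t}(z) := 1 + (z − 1)/(1 − (z − 1)·(e^{−s} − e^{−t} + i·(t·sin t − s·sin s))). Then: each φ_{s,t} is a well-defined holomorphic self-map of 𝔻; the family (φ_{s,t}) is an evolution family in 𝔻 (it satisfies φ_{s,s} = id_𝔻, the composition law, and the local absolute-continuity condition); and for every s ≥ 0 and every z ∈ 𝔻, the ω-limit of the trajectory t ↦ φ_{s,t}(z), i.e. the set of all p ∈ ℂ that are limits of sequences φ_{s,t_n}(z) with t_n → +∞, equals the full circle { w ∈ ℂ, w ≠ 1 : Re(1/(1 − w)) = Re(1/(1 − z)) + e^{−s} } ∪ {1}, which is the boundary circle of a horocycle internally tangent to the unit circle at the point 1. -/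
open Complex MeasureTheory Set Filter Topology

/-!
In the coordinate `w = (1 - z)⁻¹`, which maps `𝔻` onto the half-plane `Re w > 1/2`, every
`φ_{s,t}` is the translation `w ↦ w + A(s,t)` with
`A(s,t) = e^{-s} - e^{-t} + i (t sin t - s sin s)`. Since `Re A ≥ 0` and `A` is additive along
`s ≤ u ≤ t`, this gives self-maps of `𝔻` and the evolution-family laws; `|A(u,t)| ≤ (2+T)(t-u)`
for `t ≤ T` and `|w| > 1/2` make `t ↦ φ_{s,t}(z)` Lipschitz. Along a trajectory the real
part of `w` increases to `Re (1 - z)⁻¹ + e^{-s}`, while `t sin t` takes every real value at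
arbitrarily large times; so the trajectory accumulates at every point of the vertical line
`Re w = Re (1 - z)⁻¹ + e^{-s}` and at `w = ∞`, i.e. on the whole horocycle including `1`.
-/

theorem half_lt_re_inv_one_sub {z : ℂ} (hz : ‖z‖ < 1) : 1 / 2 < ((1 - z)⁻¹).re := by
  have hz1 : 1 - z ≠ 0 := sub_ne_zero.2 (by rintro rfl; simp at hz)
  have hnormSq : normSq z < 1 := by rw [← Complex.sq_norm]; nlinarith [norm_nonneg z]
  have hexpand : normSq (1 - z) = 1 - 2 * z.re + normSq z := by
    simp only [normSq_apply, sub_re, sub_im, one_re, one_im]; ring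
  rw [inv_re, lt_div_iff₀ (normSq_pos.2 hz1), sub_re, one_re, hexpand]
  linarith

theorem norm_one_sub_inv_lt_one {w : ℂ} (hw : 1 / 2 < w.re) : ‖1 - w⁻¹‖ < 1 := by
  have hw0 : w ≠ 0 := by rintro rfl; norm_num at hw
  have hsq : ‖w - 1‖ ^ 2 < ‖w‖ ^ 2 := by
    simp only [Complex.sq_norm, normSq_apply, sub_re, sub_im, one_re, one_im]; nlinarith
  rw [show 1 - w⁻¹ = (w - 1) / w by field_simp, norm_div, div_lt_one (norm_pos_iff.2 hw0)]
  exact lt_of_pow_lt_pow_left₀ 2 (norm_nonneg w) hsq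

theorem norm_inv_sub_inv_le {v w : ℂ} (hv : 1 / 2 < v.re) (hw : 1 / 2 < w.re) :
    ‖v⁻¹ - w⁻¹‖ ≤ 4 * ‖w - v‖ := by
  have hv' : 1 / 2 ≤ ‖v‖ := hv.le.trans (re_le_norm v)
  have hw' : 1 / 2 ≤ ‖w‖ := hw.le.trans (re_le_norm w)
  have hv0 : v ≠ 0 := norm_pos_iff.1 (by linarith)
  have hw0 : w ≠ 0 := norm_pos_iff.1 (by linarith)
  have hvinv : ‖v‖⁻¹ ≤ 2 := by rw [inv_le_comm₀ (by linarith) two_pos]; linarith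
  have hwinv : ‖w‖⁻¹ ≤ 2 := by rw [inv_le_comm₀ (by linarith) two_pos]; linarith
  calc ‖v⁻¹ - w⁻¹‖ = ‖v‖⁻¹ * ‖w - v‖ * ‖w‖⁻¹ := by
        rw [inv_sub_inv' hv0 hw0, norm_mul, norm_mul, norm_inv, norm_inv]
    _ ≤ 2 * ‖w - v‖ * 2 := by gcongr
    _ = 4 * ‖w - v‖ := by ring

theorem one_sub_sub_mul_eq_mul {z : ℂ} (hz : z ≠ 1) (A : ℂ) :
    1 - (z - 1) * A = (1 - z) * ((1 - z)⁻¹ + A) := by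
  have : 1 - z ≠ 0 := sub_ne_zero.2 hz.symm
  field_simp
  ring

theorem one_add_div_eq_one_sub_inv {z : ℂ} (hz : z ≠ 1) (A : ℂ) :
    1 + (z - 1) / (1 - (z - 1) * A) = 1 - ((1 - z)⁻¹ + A)⁻¹ := by
  have : 1 - z ≠ 0 := sub_ne_zero.2 hz.symm
  rw [one_sub_sub_mul_eq_mul hz]
  field_simp
  ring

theorem exp_neg_sub_exp_neg_le {u t : ℝ} (hu : 0 ≤ u) (hut : u ≤ t) :
    Real.exp (-u) - Real.exp (-t) ≤ t - u := by
  have hexp_t : Real.exp (-t) = Real.exp (-u) * Real.exp (u - t) := by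
    rw [← Real.exp_add]; ring_nf
  have hexp_u : Real.exp (-u) ≤ 1 := Real.exp_le_one_iff.2 (by linarith)
  nlinarith [Real.add_one_le_exp (u - t), Real.exp_pos (-u), Real.exp_pos (u - t)]

theorem abs_mul_sin_sub_mul_sin_le {T u t : ℝ} (hu : u ∈ Icc 0 T) (ht : t ∈ Icc 0 T) :
    |t * Real.sin t - u * Real.sin u| ≤ (1 + T) * |t - u| := by
  have hderiv (x : ℝ) : HasDerivAt (fun ξ => ξ * Real.sin ξ) (Real.sin x + x * Real.cos x) x :=
    ((hasDerivAt_id' x).mul (Real.hasDerivAt_sin x)).congr_deriv (by ring)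
  refine (convex_Icc 0 T).norm_image_sub_le_of_norm_hasDerivWithin_le
    (fun x _ => (hderiv x).hasDerivWithinAt) (fun x hx => ?_) hu ht
  calc ‖Real.sin x + x * Real.cos x‖ ≤ |Real.sin x| + |x| * |Real.cos x| := by
        rw [Real.norm_eq_abs, ← abs_mul]; exact abs_add_le _ _
    _ ≤ 1 + T * 1 := by
        have hxT : |x| ≤ T := abs_le.2 ⟨by linarith [hx.1, hx.2], hx.2⟩
        gcongr
        exacts [Real.abs_sin_le_one x, (abs_nonneg x).trans hxT, Real.abs_cos_le_one x]
    _ = 1 + T := by ring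

/-- `t sin t` runs from `a` down to `-(a + π)` on `[a, a + π]`, `a = π/2 + 2πn`. -/
theorem exists_mul_sin_eq (y M : ℝ) : ∃ t, M ≤ t ∧ t * Real.sin t = y := by
  obtain ⟨n, hn⟩ := exists_nat_ge (max M |y|)
  set a := Real.pi / 2 + n * (2 * Real.pi) with ha
  have hna : (n : ℝ) ≤ a := by nlinarith [n.cast_nonneg (α := ℝ), Real.pi_gt_three]
  have hpi := Real.pi_pos
  have hfa : a * Real.sin a = a := by
    rw [Real.sin_add_nat_mul_two_pi, Real.sin_pi_div_two, mul_one]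
  have hfb : (a + Real.pi) * Real.sin (a + Real.pi) = -(a + Real.pi) := by
    rw [Real.sin_add_pi, Real.sin_add_nat_mul_two_pi, Real.sin_pi_div_two]; ring
  have hy : |y| ≤ n := (le_max_right _ _).trans hn
  obtain ⟨t, ht, hft⟩ := intermediate_value_Icc' (by linarith : a ≤ a + Real.pi)
    (continuous_id.mul Real.continuous_sin).continuousOn
    (show y ∈ Icc ((a + Real.pi) * Real.sin (a + Real.pi)) (a * Real.sin a) by
      rw [hfa, hfb]; constructor <;> linarith [abs_le.1 hy])
  exact ⟨t, by linarith [le_max_left M |y|, ht.1], hft⟩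

theorem exists_seq_tendsto_atTop_mul_sin_eq (y : ℕ → ℝ) :
    ∃ tn : ℕ → ℝ, Tendsto tn atTop atTop ∧ ∀ n, tn n * Real.sin (tn n) = y n := by
  choose tn htn hsin using fun n : ℕ => exists_mul_sin_eq (y n) n
  exact ⟨tn, tendsto_atTop_mono htn tendsto_natCast_atTop_atTop, hsin⟩

noncomputable def horoShift (s t : ℝ) : ℂ :=
  ((Real.exp (-s) - Real.exp (-t) : ℝ) : ℂ) + I * ((t * Real.sin t - s * Real.sin s : ℝ) : ℂ)

noncomputable def horoFamily (s t : ℝ) (z : ℂ) : ℂ :=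
  1 + (z - 1) / (1 - (z - 1) * horoShift s t)

@[simp]
theorem horoShift_re (s t : ℝ) : (horoShift s t).re = Real.exp (-s) - Real.exp (-t) := by
  simp only [horoShift, add_re, ofReal_re, mul_re, I_re, I_im, ofReal_im]; ring

@[simp]
theorem horoShift_im (s t : ℝ) : (horoShift s t).im = t * Real.sin t - s * Real.sin s := by
  simp only [horoShift, add_im, ofReal_im, mul_im, I_re, I_im, ofReal_re]; ring

@[simp]
theorem horoShift_self (s : ℝ) : horoShift s s = 0 := by
  simp [horoShift]

theorem horoShift_add (s u t : ℝ) : horoShift s u + horoShift u t = horoShift s t := by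
  simp only [horoShift]; push_cast; ring

theorem re_horoShift_nonneg {s t : ℝ} (hst : s ≤ t) : 0 ≤ (horoShift s t).re := by
  simpa using Real.exp_le_exp.2 (neg_le_neg hst)

theorem norm_horoShift_le {u t T : ℝ} (hu : 0 ≤ u) (hut : u ≤ t) (htT : t ≤ T) :
    ‖horoShift u t‖ ≤ (2 + T) * (t - u) := by
  have hre : |(horoShift u t).re| ≤ t - u := by
    rw [abs_of_nonneg (re_horoShift_nonneg hut), horoShift_re]
    exact exp_neg_sub_exp_neg_le hu hut
  have him : |(horoShift u t).im| ≤ (1 + T) * (t - u) := by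
    simpa [abs_of_nonneg (sub_nonneg.2 hut)] using
      abs_mul_sin_sub_mul_sin_le (T := T) ⟨hu, hut.trans htT⟩ ⟨hu.trans hut, htT⟩
  linarith [norm_le_abs_re_add_abs_im (horoShift u t)]

@[simp]
theorem horoFamily_self (s : ℝ) (z : ℂ) : horoFamily s s z = z := by
  simp [horoFamily]

section horoFamily

variable {s t : ℝ} {z : ℂ}

theorem ne_one_of_mem_UD (hz : z ∈ UD) : z ≠ 1 := by
  rintro rfl; simp [UD] at hz

theorem half_lt_re_inv_one_sub_add_horoShift (hz : z ∈ UD) (hst : s ≤ t) :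
    1 / 2 < ((1 - z)⁻¹ + horoShift s t).re := by
  rw [add_re]; linarith [half_lt_re_inv_one_sub hz, re_horoShift_nonneg hst]

theorem inv_one_sub_add_horoShift_ne_zero (hz : z ∈ UD) (hst : s ≤ t) :
    (1 - z)⁻¹ + horoShift s t ≠ 0 := by
  intro h
  have := half_lt_re_inv_one_sub_add_horoShift hz hst
  rw [h, zero_re] at this
  norm_num at this

theorem horoFamily_denom_ne_zero (hz : z ∈ UD) (hst : s ≤ t) :
    1 - (z - 1) * horoShift s t ≠ 0 := by
  rw [one_sub_sub_mul_eq_mul (ne_one_of_mem_UD hz)]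
  exact mul_ne_zero (sub_ne_zero.2 (ne_one_of_mem_UD hz).symm)
    (inv_one_sub_add_horoShift_ne_zero hz hst)

theorem horoFamily_eq (hz : z ∈ UD) :
    horoFamily s t z = 1 - ((1 - z)⁻¹ + horoShift s t)⁻¹ :=
  one_add_div_eq_one_sub_inv (ne_one_of_mem_UD hz) _

theorem inv_one_sub_horoFamily (hz : z ∈ UD) :
    (1 - horoFamily s t z)⁻¹ = (1 - z)⁻¹ + horoShift s t := by
  rw [horoFamily_eq hz, sub_sub_cancel, inv_inv]

theorem horoFamily_mem_UD (hz : z ∈ UD) (hst : s ≤ t) : horoFamily s t z ∈ UD := by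
  show ‖horoFamily s t z‖ < 1
  rw [horoFamily_eq hz]
  exact norm_one_sub_inv_lt_one (half_lt_re_inv_one_sub_add_horoShift hz hst)

theorem differentiableOn_horoFamily (hst : s ≤ t) : DifferentiableOn ℂ (horoFamily s t) UD :=
  fun z hz => DifferentiableAt.differentiableWithinAt <| by
    unfold horoFamily; fun_prop (disch := exact horoFamily_denom_ne_zero hz hst)

theorem horoFamily_comp {u : ℝ} (hz : z ∈ UD) (hsu : s ≤ u) :
    horoFamily u t (horoFamily s u z) = horoFamily s t z := by
  rw [horoFamily_eq (horoFamily_mem_UD hz hsu), inv_one_sub_horoFamily hz, add_assoc,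
    horoShift_add, horoFamily_eq hz]

theorem norm_horoFamily_sub_le {u T : ℝ} (hz : z ∈ UD) (hu : 0 ≤ u) (hsu : s ≤ u) (hut : u ≤ t)
    (htT : t ≤ T) : ‖horoFamily s u z - horoFamily s t z‖ ≤ 4 * (2 + T) * (t - u) := by
  have hshift : (1 - z)⁻¹ + horoShift s t - ((1 - z)⁻¹ + horoShift s u) = horoShift u t := by
    rw [← horoShift_add s u t]; ring
  calc ‖horoFamily s u z - horoFamily s t z‖
      = ‖((1 - z)⁻¹ + horoShift s u)⁻¹ - ((1 - z)⁻¹ + horoShift s t)⁻¹‖ := by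
        rw [horoFamily_eq hz, horoFamily_eq hz, sub_sub_sub_cancel_left, norm_sub_rev]
    _ ≤ 4 * ‖horoShift u t‖ := by
        rw [← hshift]
        exact norm_inv_sub_inv_le (half_lt_re_inv_one_sub_add_horoShift hz hsu)
          (half_lt_re_inv_one_sub_add_horoShift hz (hsu.trans hut))
    _ ≤ 4 * ((2 + T) * (t - u)) := by gcongr; exact norm_horoShift_le hu hut htT
    _ = 4 * (2 + T) * (t - u) := by ring

theorem re_inv_one_sub_eq_of_tendsto_horoFamily (hz : z ∈ UD) {tn : ℕ → ℝ}
    (htn : Tendsto tn atTop atTop) {q : ℂ} (hq : q ≠ 1)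
    (hlim : Tendsto (fun n => horoFamily s (tn n) z) atTop (𝓝 q)) :
    ((1 - q)⁻¹).re = ((1 - z)⁻¹).re + Real.exp (-s) := by
  have hW : Tendsto (fun n => (1 - z)⁻¹ + horoShift s (tn n)) atTop (𝓝 (1 - q)⁻¹) := by
    simpa only [inv_one_sub_horoFamily hz] using
      (tendsto_const_nhds.sub hlim).inv₀ (sub_ne_zero.2 hq.symm)
  have hWre : Tendsto (fun n => ((1 - z)⁻¹ + horoShift s (tn n)).re) atTop
      (𝓝 (((1 - z)⁻¹).re + Real.exp (-s))) := by
    simpa only [add_re, horoShift_re, sub_zero, Function.comp_def] using tendsto_const_nhds.add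
      (tendsto_const_nhds.sub (Real.tendsto_exp_neg_atTop_nhds_zero.comp htn))
  exact tendsto_nhds_unique ((continuous_re.tendsto _).comp hW) hWre

theorem exists_tendsto_horoFamily_of_re_inv_one_sub_eq (hz : z ∈ UD) {q : ℂ} (hq : q ≠ 1)
    (hre : ((1 - q)⁻¹).re = ((1 - z)⁻¹).re + Real.exp (-s)) :
    ∃ tn : ℕ → ℝ, Tendsto tn atTop atTop ∧
      Tendsto (fun n => horoFamily s (tn n) z) atTop (𝓝 q) := by
  obtain ⟨tn, htn, hsin⟩ := exists_seq_tendsto_atTop_mul_sin_eq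
    fun _ => ((1 - q)⁻¹).im - ((1 - z)⁻¹).im + s * Real.sin s
  have hW (n : ℕ) : (1 - z)⁻¹ + horoShift s (tn n) = (1 - q)⁻¹ - (Real.exp (-tn n) : ℂ) := by
    apply Complex.ext
    · simp only [add_re, horoShift_re, sub_re, ofReal_re, hre]; ring
    · simp only [add_im, horoShift_im, sub_im, ofReal_im, hsin]; ring
  have hWlim : Tendsto (fun n => (1 - z)⁻¹ + horoShift s (tn n)) atTop (𝓝 (1 - q)⁻¹) := by
    simpa only [hW, ofReal_zero, sub_zero, Function.comp_def] using tendsto_const_nhds.sub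
      ((continuous_ofReal.tendsto 0).comp (Real.tendsto_exp_neg_atTop_nhds_zero.comp htn))
  refine ⟨tn, htn, ?_⟩
  simpa only [horoFamily_eq hz, inv_inv, sub_sub_cancel] using
    (tendsto_const_nhds (x := (1 : ℂ))).sub (hWlim.inv₀ (inv_ne_zero (sub_ne_zero.2 hq.symm)))

theorem exists_tendsto_horoFamily_one (hz : z ∈ UD) :
    ∃ tn : ℕ → ℝ, Tendsto tn atTop atTop ∧
      Tendsto (fun n => horoFamily s (tn n) z) atTop (𝓝 1) := by
  obtain ⟨tn, htn, hsin⟩ := exists_seq_tendsto_atTop_mul_sin_eq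
    fun n => n - ((1 - z)⁻¹).im + s * Real.sin s
  have hWnorm : Tendsto (fun n => ‖(1 - z)⁻¹ + horoShift s (tn n)‖) atTop atTop := by
    refine tendsto_atTop_mono (fun n => ?_) tendsto_natCast_atTop_atTop
    calc (n : ℝ) = ((1 - z)⁻¹ + horoShift s (tn n)).im := by
          simp only [add_im, horoShift_im, hsin]; ring
      _ ≤ ‖(1 - z)⁻¹ + horoShift s (tn n)‖ := (le_abs_self _).trans (abs_im_le_norm _)
  have hWinv : Tendsto (fun n => ((1 - z)⁻¹ + horoShift s (tn n))⁻¹) atTop (𝓝 0) := by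
    rw [tendsto_zero_iff_norm_tendsto_zero]
    simpa only [norm_inv, Function.comp_def] using tendsto_inv_atTop_zero.comp hWnorm
  refine ⟨tn, htn, ?_⟩
  simpa only [horoFamily_eq hz, sub_zero] using tendsto_const_nhds.sub hWinv

end horoFamily

/-- The explicit family
`φ_{s,t}(z) = 1 + (z−1)/(1 − (z−1)(e^{−s} − e^{−t} + i(t·sin t − s·sin s)))` is a
well-defined evolution family of holomorphic self-maps of `𝔻` and, for every `s ≥ 0`
and `z ∈ 𝔻`, the ω-limit of `t ↦ φ_{s,t}(z)` is the full boundary circle of the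
horocycle `{w ≠ 1 : Re(1/(1−w)) = Re(1/(1−z)) + e^{−s}} ∪ {1}` at the point `1`. -/
theorem example_omega_limit_full_horocycle (φ : ℝ → ℝ → ℂ → ℂ)
    (hφ : ∀ s t : ℝ, ∀ z : ℂ, φ s t z =
      1 + (z - 1) / (1 - (z - 1) * (((Real.exp (-s) - Real.exp (-t) : ℝ) : ℂ) +
        Complex.I * ((t * Real.sin t - s * Real.sin s : ℝ) : ℂ)))) :
    (∀ s t : ℝ, 0 ≤ s → s ≤ t → ∀ z ∈ UD,
      (1 - (z - 1) * (((Real.exp (-s) - Real.exp (-t) : ℝ) : ℂ) +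
        Complex.I * ((t * Real.sin t - s * Real.sin s : ℝ) : ℂ))) ≠ 0 ∧
      φ s t z ∈ UD) ∧
    (∀ s t : ℝ, 0 ≤ s → s ≤ t → DifferentiableOn ℂ (φ s t) UD) ∧
    (∀ s : ℝ, 0 ≤ s → ∀ z ∈ UD, φ s s z = z) ∧
    (∀ s u t : ℝ, 0 ≤ s → s ≤ u → u ≤ t → ∀ z ∈ UD,
      φ s t z = φ u t (φ s u z)) ∧
    (∀ z ∈ UD, ∀ T : ℝ, 0 < T →
      ∃ k : ℝ → ℝ, (∀ ξ, 0 ≤ k ξ) ∧ MeasureTheory.IntegrableOn k (Set.Icc 0 T) ∧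
        ∀ s u t : ℝ, 0 ≤ s → s ≤ u → u ≤ t → t ≤ T →
          ‖φ s u z - φ s t z‖ ≤ ∫ ξ in u..t, k ξ) ∧
    (∀ s : ℝ, 0 ≤ s → ∀ z ∈ UD,
      {q : ℂ | ∃ tn : ℕ → ℝ, Tendsto tn atTop atTop ∧
          Tendsto (fun n => φ s (tn n) z) atTop (𝓝 q)} =
        {w : ℂ | w ≠ 1 ∧ (1 / (1 - w)).re = (1 / (1 - z)).re + Real.exp (-s)}
          ∪ {1}) := by
  obtain rfl : φ = horoFamily := funext fun s => funext fun t => funext (hφ s t)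
  refine ⟨fun s t _ hst z hz => ⟨horoFamily_denom_ne_zero hz hst, horoFamily_mem_UD hz hst⟩,
    fun s t _ hst => differentiableOn_horoFamily hst, fun s _ z _ => horoFamily_self s z,
    fun s u t _ hsu _ z hz => (horoFamily_comp hz hsu).symm, ?_, ?_⟩
  · intro z hz T hT
    refine ⟨fun _ => 4 * (2 + T), fun _ => by linarith, integrableOn_const measure_Icc_lt_top.ne,
      fun s u t hs hsu hut htT => ?_⟩
    rw [intervalIntegral.integral_const, smul_eq_mul, mul_comm]
    exact norm_horoFamily_sub_le hz (hs.trans hsu) hsu hut htT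
  · intro s _ z hz
    ext q
    simp only [one_div]
    constructor
    · rintro ⟨tn, htn, hlim⟩
      by_cases hq : q = 1
      · exact Or.inr hq
      · exact Or.inl ⟨hq, re_inv_one_sub_eq_of_tendsto_horoFamily hz htn hq hlim⟩
    · rintro (⟨hq, hre⟩ | rfl)
      · exact exists_tendsto_horoFamily_of_re_inv_one_sub_eq hz hq hre
      · exact exists_tendsto_horoFamily_one hz
end
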